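/- arXiv:0812.1249 — 4 statements merged into one kernel-verified Lean document; each statement's English description precedes it below -/
import Mathlib

section
/- The n-dimensional volume of the descent polytope DP_S equals β(S)/n!, where β(S) is the number of permutations of {1,...,n} with descent set exactly S. -/
/-!
Up to the null set of points with a repeated coordinate, the cube `[0,1]^n` is the disjoint union
of the `n!` open simplices `{x | x a < x b ↔ π a < π b}`, one for each permutation `π`; they are
permuted by permutations of the coordinates, so each has volume `1/n!`. A point with distinct
coordinates in such a simplex has the same descent set as `π`, hence lies in `DP_S` iff
`π` has descent set `S`.
-/

open MeasureTheory Set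

/-- The descent polytope `DP_S` in `[0,1]^n`: using 1-indexed positions,
`x_i ≥ x_{i+1}` if `i ∈ S` and `x_i ≤ x_{i+1}` otherwise. -/
def DP (n : ℕ) (S : Set ℕ) : Set (Fin n → ℝ) :=
  {x | (∀ i, 0 ≤ x i ∧ x i ≤ 1) ∧
    ∀ i : ℕ, ∀ h : i + 1 < n,
      ((i + 1) ∈ S → x ⟨i + 1, h⟩ ≤ x ⟨i, Nat.lt_of_succ_lt h⟩) ∧
      ((i + 1) ∉ S → x ⟨i, Nat.lt_of_succ_lt h⟩ ≤ x ⟨i + 1, h⟩)}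

/-- The descent set of a permutation of `{1,…,n}`, in 1-indexed positions:
`j` is a descent iff `1 ≤ j ≤ n-1` and `π_j > π_{j+1}` (1-indexed), i.e.
`π ⟨j-1⟩ > π ⟨j⟩` 0-indexed. -/
def descSetPerm (n : ℕ) (π : Equiv.Perm (Fin n)) : Set ℕ :=
  {j | ∃ h : j < n, 0 < j ∧ π ⟨j, h⟩ < π ⟨j - 1, lt_of_le_of_lt (Nat.sub_le j 1) h⟩}

section Combinatorics

variable {α : Type*} [LinearOrder α] {n : ℕ}

def descentSet (x : Fin n → α) : Set ℕ :=
  {j | ∃ h : j < n, 0 < j ∧ x ⟨j, h⟩ < x ⟨j - 1, by omega⟩}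

lemma descSetPerm_eq_descentSet (π : Equiv.Perm (Fin n)) : descSetPerm n π = descentSet ⇑π :=
  rfl

lemma descentSet_eq_iff {x : Fin n → α} {S : Set ℕ} (hS : S ⊆ Icc 1 (n - 1)) :
    descentSet x = S ↔
      ∀ i : ℕ, ∀ h : i + 1 < n, (i + 1 ∈ S ↔ x ⟨i + 1, h⟩ < x ⟨i, by omega⟩) := by
  refine ⟨fun hx i h => by simp [← hx, descentSet, h], fun hx => ?_⟩
  ext j
  constructor
  · rintro ⟨h, hj, hlt⟩
    obtain ⟨i, rfl⟩ := Nat.exists_eq_add_one_of_ne_zero hj.ne'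
    exact (hx i h).2 hlt
  · intro hjS
    obtain ⟨hj1, hjn⟩ := hS hjS
    obtain ⟨i, rfl⟩ := Nat.exists_eq_add_one_of_ne_zero (by omega : j ≠ 0)
    exact ⟨by omega, by omega, (hx i (by omega)).1 hjS⟩

def orderCell (π : Equiv.Perm (Fin n)) : Set (Fin n → α) :=
  {x | StrictMono (x ∘ π.symm)}

lemma lt_iff_of_mem_orderCell {π : Equiv.Perm (Fin n)} {x : Fin n → α} (hx : x ∈ orderCell π)
    (a b : Fin n) : x a < x b ↔ π a < π b := by
  simpa using (hx.lt_iff_lt (a := π a) (b := π b))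

lemma descentSet_eq_of_mem_orderCell {π : Equiv.Perm (Fin n)} {x : Fin n → α}
    (hx : x ∈ orderCell π) : descentSet x = descentSet ⇑π := by
  ext j
  simp [descentSet, lt_iff_of_mem_orderCell hx]

lemma mem_orderCell_sort_symm {x : Fin n → α} (hx : Function.Injective x) :
    x ∈ orderCell (Tuple.sort x).symm :=
  (Tuple.monotone_sort x).strictMono_of_injective (hx.comp (Tuple.sort x).injective)

lemma pairwise_disjoint_orderCell :
    Pairwise (Function.onFun Disjoint (orderCell : Equiv.Perm (Fin n) → Set (Fin n → α))) := by
  intro π σ hπσ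
  refine Set.disjoint_left.2 fun x hπ hσ => hπσ ?_
  have hx : Function.Injective x := by
    simpa using hπ.injective.comp π.injective
  have h := Tuple.unique_monotone hπ.monotone hσ.monotone
  exact Equiv.symm_bijective.injective (DFunLike.coe_injective (hx.comp_left h))

end Combinatorics

lemma mem_DP_iff_of_injective {n : ℕ} {S : Set ℕ} (hS : S ⊆ Icc 1 (n - 1)) {x : Fin n → ℝ}
    (hx : Function.Injective x) : x ∈ DP n S ↔ x ∈ Icc 0 1 ∧ descentSet x = S := by
  have hstrict : ∀ {p : Prop} {a b : ℝ}, a ≠ b → ((p → b ≤ a) ∧ (¬p → a ≤ b) ↔ (p ↔ b < a)) := by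
    intro p a b hab
    by_cases p <;> simp [*, lt_iff_le_and_ne, hab.symm]
  rw [descentSet_eq_iff hS, DP, mem_ofPred_eq, mem_Icc, Pi.le_def, Pi.le_def, ← forall_and]
  refine and_congr Iff.rfl (forall_congr' fun i => forall_congr' fun h => hstrict ?_)
  exact hx.ne (by simp [Fin.ext_iff])

section Volume

variable {ι : Type*} [Fintype ι] {n : ℕ}

lemma volume_setOf_apply_eq_apply {a b : ι} (hab : a ≠ b) :
    volume {x : ι → ℝ | x a = x b} = 0 := by
  classical
  let L : (ι → ℝ) →ₗ[ℝ] ℝ := LinearMap.proj (R := ℝ) (φ := fun _ => ℝ) a - LinearMap.proj b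
  have hker : {x : ι → ℝ | x a = x b} = LinearMap.ker L := by
    ext x
    simp [L, sub_eq_zero]
  have hne : LinearMap.ker L ≠ ⊤ := by
    rw [Ne, LinearMap.ker_eq_top]
    intro h
    simpa [L, Ne.symm hab] using LinearMap.congr_fun h (Pi.single a 1)
  rw [hker]
  exact Measure.addHaar_submodule volume _ hne

lemma ae_injective : ∀ᵐ x : ι → ℝ, Function.Injective x := by
  refine ae_all_iff.2 fun a => ae_all_iff.2 fun b => ?_
  by_cases hab : a = b
  · simp [hab]
  · refine ae_iff.2 (measure_mono_null (fun x hx => ?_) (volume_setOf_apply_eq_apply hab))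
    simp_all

lemma measurableSet_orderCell (π : Equiv.Perm (Fin n)) :
    MeasurableSet (orderCell π : Set (Fin n → ℝ)) := by
  simp only [orderCell, StrictMono, ofPred_forall]
  exact .iInter fun a => .iInter fun b => .iInter fun _ =>
    measurableSet_lt (measurable_pi_apply _) (measurable_pi_apply _)

lemma volume_cube_inter_orderCell (π : Equiv.Perm (Fin n)) :
    volume (Icc (0 : Fin n → ℝ) 1 ∩ orderCell π) =
      volume (Icc (0 : Fin n → ℝ) 1 ∩ {x | StrictMono x}) := by
  let e := MeasurableEquiv.piCongrLeft (fun _ : Fin n => ℝ) π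
  have he : ∀ x, e x = x ∘ π.symm := fun x => funext fun i => by
    simpa using MeasurableEquiv.piCongrLeft_apply_apply π (β := fun _ => ℝ) x (π.symm i)
  have hpre : e ⁻¹' (Icc 0 1 ∩ {x | StrictMono x}) = Icc 0 1 ∩ orderCell π := by
    ext x
    simp only [orderCell, preimage_inter, preimage_ofPred_eq, he, mem_inter_iff, mem_preimage,
      mem_Icc, Pi.le_def, Pi.zero_apply, Function.comp_apply, Pi.one_apply, ← forall_and,
      π.symm.forall_congr_right (q := fun i => 0 ≤ x i ∧ x i ≤ 1)]
  rw [← hpre]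
  exact (volume_measurePreserving_piCongrLeft _ π).measure_preimage
    (measurableSet_Icc.inter (measurableSet_orderCell (1 : Equiv.Perm (Fin n)))).nullMeasurableSet

lemma iUnion_cube_inter_orderCell_ae_eq :
    (⋃ π : Equiv.Perm (Fin n), Icc 0 1 ∩ orderCell π : Set (Fin n → ℝ)) =ᵐ[volume] Icc 0 1 := by
  refine Filter.eventuallyEq_set.2 ?_
  filter_upwards [ae_injective] with x hx
  exact ⟨fun h => (mem_iUnion.1 h).elim fun _ h => h.1,
    fun h => mem_iUnion.2 ⟨_, h, mem_orderCell_sort_symm hx⟩⟩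

lemma volume_cube_inter_setOf_strictMono :
    volume (Icc (0 : Fin n → ℝ) 1 ∩ {x | StrictMono x}) = (n.factorial : ENNReal)⁻¹ := by
  have hdisj : Pairwise (Function.onFun Disjoint fun π : Equiv.Perm (Fin n) =>
      (Icc 0 1 ∩ orderCell π : Set (Fin n → ℝ))) := fun π σ h =>
    (pairwise_disjoint_orderCell h).mono inter_subset_right inter_subset_right
  have hsum := measure_iUnion (μ := volume) hdisj fun π =>
    measurableSet_Icc.inter (measurableSet_orderCell π)
  rw [measure_congr iUnion_cube_inter_orderCell_ae_eq, Real.volume_Icc_pi, tsum_fintype,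
    Finset.sum_congr rfl fun π _ => volume_cube_inter_orderCell π] at hsum
  simp only [Pi.one_apply, Pi.zero_apply, sub_zero, ENNReal.ofReal_one, Finset.prod_const_one,
    Finset.sum_const, Finset.card_univ, Fintype.card_perm, Fintype.card_fin, nsmul_eq_mul] at hsum
  exact ENNReal.eq_inv_of_mul_eq_one_left ((mul_comm _ _).trans hsum.symm)

lemma volume_biUnion_cube_inter_orderCell (A : Finset (Equiv.Perm (Fin n))) :
    volume (⋃ π ∈ A, Icc (0 : Fin n → ℝ) 1 ∩ orderCell π) = A.card / n.factorial := by
  rw [measure_biUnion_finset (fun π _ σ _ h => (pairwise_disjoint_orderCell h).mono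
      inter_subset_right inter_subset_right)
      fun π _ => measurableSet_Icc.inter (measurableSet_orderCell π),
    Finset.sum_congr rfl fun π _ => volume_cube_inter_orderCell π,
    volume_cube_inter_setOf_strictMono, Finset.sum_const, nsmul_eq_mul, div_eq_mul_inv]

end Volume

lemma DP_ae_eq_biUnion_orderCell {n : ℕ} {S : Set ℕ} (hS : S ⊆ Icc 1 (n - 1))
    [DecidablePred fun π : Equiv.Perm (Fin n) => descSetPerm n π = S] :
    DP n S =ᵐ[volume] ⋃ π ∈ Finset.univ.filter (fun π => descSetPerm n π = S),
      Icc (0 : Fin n → ℝ) 1 ∩ orderCell π := by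
  refine Filter.eventuallyEq_set.2 ?_
  filter_upwards [ae_injective] with x hx
  simp only [mem_DP_iff_of_injective hS hx, mem_iUnion₂, Finset.mem_filter, Finset.mem_univ,
    true_and, mem_inter_iff, exists_prop]
  constructor
  · rintro ⟨hcube, hdesc⟩
    have hsort := mem_orderCell_sort_symm hx
    refine ⟨_, ?_, hcube, hsort⟩
    rw [descSetPerm_eq_descentSet, ← descentSet_eq_of_mem_orderCell hsort, hdesc]
  · rintro ⟨π, hπ, hcube, hxπ⟩
    rw [descSetPerm_eq_descentSet] at hπ
    exact ⟨hcube, (descentSet_eq_of_mem_orderCell hxπ).trans hπ⟩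

theorem stmt3_general (n : ℕ) (S : Set ℕ) (hS : S ⊆ Set.Icc 1 (n - 1)) :
    MeasureTheory.volume (DP n S) =
      (Nat.card {π : Equiv.Perm (Fin n) // descSetPerm n π = S} : ENNReal) /
        (Nat.factorial n : ENNReal) := by
  classical
  rw [measure_congr (DP_ae_eq_biUnion_orderCell hS), volume_biUnion_cube_inter_orderCell,
    Nat.card_eq_fintype_card, Fintype.card_subtype]

/-- the volume of `DP_S` is `β(S)/n!`. -/
theorem stmt3 (n : ℕ) (hn : 1 ≤ n) (S : Set ℕ) (hS : S ⊆ Set.Icc 1 (n - 1)) :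
    MeasureTheory.volume (DP n S) =
      (Nat.card {π : Equiv.Perm (Fin n) // descSetPerm n π = S} : ENNReal) /
        (Nat.factorial n : ENNReal) :=
  stmt3_general n S hS
end

section
/- Define F : words over {x,y} → ℤ[t] recursively via auxiliary polynomials K and L: K(empty) = L(empty) = 0, K(y·v) = K(v), L(x·v) = L(v), K(x·v) = L(y·v) = (t+1)·(K(v) + L(v) + t + 1), and F(v) = K(v) + L(v) + t + 2. Then for every word v of length m, F(v) = 1 + Σ_{T ⊆ [m]} ((t+1)/t)^{κ(v^T)} · t^{|T|+1}, where v^T is the subword of v indexed by T, κ(w) = 2 + #{i : w_i ≠ w_{i+1}} for nonempty w and κ(empty) = 1. (Here each summand ((t+1)/t)^{κ(v^T)}·t^{|T|+1} is a polynomial in t since κ(v^T) ≤ |T|+1.) -/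
/-- `κ(w) = 2 + #{i : w_i ≠ w_{i+1}}` for nonempty `w`, and `κ(empty) = 1`. -/
def kappa (w : List Bool) : ℕ :=
  if w = [] then 1 else 2 + (w.zip w.tail).countP (fun p => p.1 != p.2)

/-- The subword of `v` at the (1-indexed) positions in `T`. -/
def subword (v : List Bool) (T : Finset ℕ) : List Bool :=
  ((v.zipIdx.map Prod.swap).filter (fun p => decide (p.1 + 1 ∈ T))).map Prod.snd

/-- The `f`-polynomial `F_v(t) = 1 + ∑_{T ⊆ [|v|]} ((t+1)/t)^{κ(v^T)} t^{|T|+1}`,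
written with the power of `t` as `t^{|T|+1-κ(v^T)}` (valid since `κ(v^T) ≤ |T|+1`). -/
noncomputable def fPoly (v : List Bool) : Polynomial ℤ :=
  1 + ∑ T ∈ (Finset.Icc 1 v.length).powerset,
      (Polynomial.X + 1) ^ kappa (subword v T) *
        Polynomial.X ^ (T.card + 1 - kappa (subword v T))

/-- The pair `(K_v, L_v)` defined recursively (with `x = false`, `y = true`):
`K(1) = L(1) = 0`, `K(y·v) = K(v)`, `L(x·v) = L(v)`,
`K(x·v) = L(y·v) = (t+1)(K(v)+L(v)+t+1)`. -/
noncomputable def KL : List Bool → Polynomial ℤ × Polynomial ℤ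
  | [] => (0, 0)
  | false :: v =>
      ((Polynomial.X + 1) * ((KL v).1 + (KL v).2 + Polynomial.X + 1), (KL v).2)
  | true :: v =>
      ((KL v).1, (Polynomial.X + 1) * ((KL v).1 + (KL v).2 + Polynomial.X + 1))

/-!
Write `S_b(v)` for the part of the sum in `F(v)` over those `T` for which `v^T` starts with the
letter `b`; the empty `T` contributes `t + 1`, so `F(v) = S_x(v) + S_y(v) + t + 2`, and it suffices
to show that `(S_x, S_y)` satisfies the recursion of `(K, L)`. Split the subsets of the positions
of `a·v` by whether they contain the first position. Those that do not give the subwords `v^T`;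
those that do give the words `a·v^T`, which start with `a`, so `S_b(a·v) = S_b(v)` for `b ≠ a`.
The `κ` of `a·v^T` equals `κ(v^T)` if `v^T` starts with `a` and exceeds it by one otherwise, so
the summand of `T` is multiplied by `t` or by `t + 1`; adding the summand of `T` itself when `v^T`
starts with `a` yields `S_a(a·v) = (t + 1) · (S_x(v) + S_y(v) + t + 1)`.
-/

open Polynomial Finset

lemma kappa_cons (a : Bool) (w : List Bool) :
    kappa (a :: w) = if w.head? = some a then kappa w else kappa w + 1 := by
  cases w with
  | nil => simp [kappa]
  | cons b w =>
    by_cases h : b = a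
    · simp [kappa, h]
    · simp [kappa, h, Ne.symm h, add_assoc]

lemma kappa_le_length_add_one (w : List Bool) : kappa w ≤ w.length + 1 := by
  induction w with
  | nil => simp [kappa]
  | cons a w ih =>
    rw [kappa_cons]
    split <;> simp only [List.length_cons] <;> omega

lemma subword_cons {a : Bool} {v : List Bool} {T T' : Finset ℕ}
    (h : ∀ n, n + 1 ∈ T' ↔ n + 2 ∈ T) :
    subword (a :: v) T = if 1 ∈ T then a :: subword v T' else subword v T' := by
  have hzip : (a :: v).zipIdx.map Prod.swap =
      (0, a) :: (v.zipIdx.map Prod.swap).map (Prod.map (· + 1) id) := by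
    rw [List.zipIdx_cons', List.map_cons, List.map_map, List.map_map]; rfl
  have hfilter : ∀ l : List (ℕ × Bool),
      (l.map (Prod.map (· + 1) id)).filter (fun p => decide (p.1 + 1 ∈ T)) =
        (l.filter (fun p => decide (p.1 + 1 ∈ T'))).map (Prod.map (· + 1) id) := by
    intro l
    rw [List.filter_map]
    exact congrArg _ (List.filter_congr fun p _ => by simp [h])
  rw [subword, subword, hzip, List.filter_cons, hfilter]
  by_cases h1 : 1 ∈ T <;> simp [h1, List.map_map]

lemma subword_cons_image_succ (a : Bool) (v : List Bool) {T : Finset ℕ} (h0 : 0 ∉ T) :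
    subword (a :: v) (T.image (· + 1)) = subword v T := by
  rw [subword_cons (T' := T) (by simp), if_neg (by simpa using h0)]

lemma subword_cons_insert_one (a : Bool) (v : List Bool) (T : Finset ℕ) :
    subword (a :: v) (insert 1 (T.image (· + 1))) = a :: subword v T := by
  rw [subword_cons (T' := T) (by simp), if_pos (mem_insert_self _ _)]

lemma length_subword {v : List Bool} {T : Finset ℕ} (hT : T ⊆ Icc 1 v.length) :
    (subword v T).length = #T := by
  have hfst : (v.zipIdx.map Prod.swap).map Prod.fst = List.range v.length := by
    rw [List.map_map, List.range_eq_range']; exact List.zipIdx_map_snd 0 v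
  have hcount : (subword v T).length = ((range v.length).filter (· + 1 ∈ T)).card := by
    rw [subword, List.length_map, ← List.countP_eq_length_filter,
      show (fun p : ℕ × Bool => decide (p.1 + 1 ∈ T)) = (fun i => decide (i + 1 ∈ T)) ∘ Prod.fst
        from rfl, ← List.countP_map, hfst, List.countP_eq_length_filter]
    rfl
  rw [hcount]
  refine card_nbij' (· + 1) (· - 1) ?_ ?_ ?_ ?_ <;> intro i hi <;> grind

lemma sum_powerset_Icc_succ {M : Type*} [AddCommMonoid M] (m : ℕ) (f : Finset ℕ → M) :
    ∑ T ∈ (Icc 1 (m + 1)).powerset, f T =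
      ∑ T ∈ (Icc 1 m).powerset, (f (T.image (· + 1)) + f (insert 1 (T.image (· + 1)))) := by
  have hinj : Function.Injective (image (· + 1) : Finset ℕ → Finset ℕ) :=
    image_injective (add_left_injective 1)
  rw [← insert_Icc_add_one_left_eq_Icc (by omega), ← image_add_right_Icc,
    sum_powerset_insert (by simp), powerset_image, sum_image hinj.injOn, sum_image hinj.injOn,
    sum_add_distrib]

noncomputable def fPolyTerm (v : List Bool) (T : Finset ℕ) : ℤ[X] :=
  (X + 1) ^ kappa (subword v T) * X ^ (#T + 1 - kappa (subword v T))

noncomputable def headSum (b : Bool) (v : List Bool) : ℤ[X] :=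
  ∑ T ∈ (Icc 1 v.length).powerset, if (subword v T).head? = some b then fPolyTerm v T else 0

lemma fPolyTerm_cons_image_succ (a : Bool) (v : List Bool) {T : Finset ℕ} (h0 : 0 ∉ T) :
    fPolyTerm (a :: v) (T.image (· + 1)) = fPolyTerm v T := by
  rw [fPolyTerm, fPolyTerm, subword_cons_image_succ a v h0,
    card_image_of_injective _ (add_left_injective 1)]

lemma fPolyTerm_cons_insert_one (a : Bool) {v : List Bool} {T : Finset ℕ}
    (hT : T ⊆ Icc 1 v.length) :
    fPolyTerm (a :: v) (insert 1 (T.image (· + 1))) =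
      (if (subword v T).head? = some a then X else X + 1) * fPolyTerm v T := by
  have hcard : #(insert 1 (T.image (· + 1))) = #T + 1 := by
    rw [card_insert_of_notMem (by simpa using notMem_mono hT (by simp)),
      card_image_of_injective _ (add_left_injective 1)]
  have hkappa := kappa_le_length_add_one (subword v T)
  rw [length_subword hT] at hkappa
  rw [fPolyTerm, fPolyTerm, subword_cons_insert_one, hcard, kappa_cons]
  split
  · rw [show #T + 1 + 1 - kappa (subword v T) = #T + 1 - kappa (subword v T) + 1 by omega]
    ring
  · rw [show #T + 1 + 1 - (kappa (subword v T) + 1) = #T + 1 - kappa (subword v T) by omega]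
    ring

lemma sum_fPolyTerm (v : List Bool) :
    ∑ T ∈ (Icc 1 v.length).powerset, fPolyTerm v T =
      headSum false v + headSum true v + (X + 1) := by
  have hempty : fPolyTerm v ∅ = X + 1 := by simp [fPolyTerm, subword, kappa]
  calc ∑ T ∈ (Icc 1 v.length).powerset, fPolyTerm v T
      = ∑ T ∈ (Icc 1 v.length).powerset,
          ((if (subword v T).head? = some false then fPolyTerm v T else 0) +
            (if (subword v T).head? = some true then fPolyTerm v T else 0) +
            if T = ∅ then fPolyTerm v T else 0) := sum_congr rfl fun T hT => ?_
    _ = headSum false v + headSum true v + (X + 1) := by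
      rw [sum_add_distrib, sum_add_distrib, sum_ite_eq', if_pos (empty_mem_powerset _), hempty,
        headSum, headSum]
  have hlength := length_subword (mem_powerset.mp hT)
  rcases hw : subword v T with _ | ⟨b, w⟩
  · rw [hw, List.length_nil, eq_comm, card_eq_zero] at hlength
    simp [hlength]
  · have hT : T ≠ ∅ := by
      rintro rfl
      simp [subword] at hw
    cases b <;> simp [hT]

lemma headSum_nil (b : Bool) : headSum b [] = 0 := by
  simp [headSum, subword]

lemma headSum_cons_self (a : Bool) (v : List Bool) :
    headSum a (a :: v) = (X + 1) * ∑ T ∈ (Icc 1 v.length).powerset, fPolyTerm v T := by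
  rw [headSum, List.length_cons, sum_powerset_Icc_succ, mul_sum]
  refine sum_congr rfl fun T hT => ?_
  rw [mem_powerset] at hT
  have h0 : 0 ∉ T := notMem_mono hT (by simp)
  rw [subword_cons_image_succ a v h0, subword_cons_insert_one, fPolyTerm_cons_image_succ a v h0,
    fPolyTerm_cons_insert_one a hT]
  simp only [List.head?_cons, ↓reduceIte]
  split_ifs <;> ring

lemma headSum_cons_of_ne {a b : Bool} (hba : b ≠ a) (v : List Bool) :
    headSum b (a :: v) = headSum b v := by
  rw [headSum, List.length_cons, sum_powerset_Icc_succ, headSum]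
  refine sum_congr rfl fun T hT => ?_
  have h0 : 0 ∉ T := notMem_mono (mem_powerset.mp hT) (by simp)
  simp [subword_cons_image_succ a v h0, subword_cons_insert_one, fPolyTerm_cons_image_succ a v h0,
    Ne.symm hba]

lemma KL_eq_headSum (v : List Bool) : KL v = (headSum false v, headSum true v) := by
  induction v with
  | nil => simp [KL, headSum_nil]
  | cons a v ih =>
    cases a
    · rw [KL, ih, headSum_cons_self, headSum_cons_of_ne (by decide), sum_fPolyTerm]
      exact Prod.ext (by ring) rfl
    · rw [KL, ih, headSum_cons_self, headSum_cons_of_ne (by decide), sum_fPolyTerm]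
      exact Prod.ext rfl (by ring)

/-- `F(v) = K(v) + L(v) + t + 2` agrees with the summation formula. -/
theorem stmt5 (v : List Bool) :
    (KL v).1 + (KL v).2 + Polynomial.X + 2 = fPoly v := by
  rw [KL_eq_headSum, fPoly]
  change _ = 1 + ∑ T ∈ _, fPolyTerm v T
  rw [sum_fPolyTerm]
  ring
end

section
/- Define f(v) := 1 + Σ_T ((t+1)/t)^{κ(v^T)} t^{|T|+1} summed over subsets T of positions of v (a polynomial in t). Then for any words u, v with |u| + |v| = n - 3, the difference f(u·y·x·v) - f(u·y·y·v̄) is a polynomial in t of degree n-1 with strictly positive coefficients in degrees 0 through n-1, where v̄ is the word v with x's and y's exchanged. -/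
open Polynomial

namespace List

lemma sum_map_sublists_append {α M : Type*} [AddCommMonoid M] (F : List α → M) (p q : List α) :
    ((p ++ q).sublists.map F).sum =
      (q.sublists.map fun b => (p.sublists.map fun a => F (a ++ b)).sum).sum := by
  simp [sublists_append, flatMap_def, sum_flatten, Function.comp_def]

lemma sum_map_sublists_cons {α M : Type*} [AddCommMonoid M] (F : List α → M) (x : α)
    (q : List α) :
    ((x :: q).sublists.map F).sum = (q.sublists.map fun b => F b + F (x :: b)).sum := by
  simp [sublists_cons, flatMap_def, sum_flatten, Function.comp_def]

end List

namespace Polynomial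

variable {R : Type*} [Semiring R] [PartialOrder R] {P Q : R[X]} {m k : ℕ}

def PosCoeffsUpTo (P : R[X]) (m : ℕ) : Prop :=
  P.natDegree ≤ m ∧ ∀ i ≤ m, 0 < P.coeff i

lemma PosCoeffsUpTo.coeff_nonneg (h : PosCoeffsUpTo P m) (i : ℕ) : 0 ≤ P.coeff i := by
  rcases le_or_gt i m with hi | hi
  · exact (h.2 i hi).le
  · rw [coeff_eq_zero_of_natDegree_lt (h.1.trans_lt hi)]

lemma PosCoeffsUpTo.mul [IsStrictOrderedRing R] (hP : PosCoeffsUpTo P m)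
    (hQ : PosCoeffsUpTo Q k) : PosCoeffsUpTo (P * Q) (m + k) := by
  refine ⟨natDegree_mul_le.trans (add_le_add hP.1 hQ.1), fun i hi => ?_⟩
  rw [coeff_mul]
  refine Finset.sum_pos' (fun x _ => mul_nonneg (hP.coeff_nonneg _) (hQ.coeff_nonneg _))
    ⟨(min i m, i - min i m), by simp, mul_pos (hP.2 _ (min_le_right _ _)) (hQ.2 _ (by omega))⟩

lemma PosCoeffsUpTo.natDegree_eq (h : PosCoeffsUpTo P m) : P.natDegree = m :=
  le_antisymm h.1 (le_natDegree_of_ne_zero (h.2 m le_rfl).ne')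

end Polynomial

namespace DescentPolytope

@[simp] lemma kappa_nil : kappa [] = 1 := rfl

@[simp] lemma kappa_singleton (x : Bool) : kappa [x] = 2 := rfl

@[simp] lemma kappa_cons_cons (x y : Bool) (l : List Bool) :
    kappa (x :: y :: l) = kappa (y :: l) + if x = y then 0 else 1 := by
  cases x <;> cases y <;> simp [kappa] <;> omega

lemma kappa_le_length_add_one (l : List Bool) : kappa l ≤ l.length + 1 := by
  induction l with
  | nil => simp
  | cons x l ih =>
    cases l with
    | nil => simp
    | cons y l => simp only [kappa_cons_cons, List.length_cons] at ih ⊢; split <;> omega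

lemma one_le_kappa (l : List Bool) : 1 ≤ kappa l := by
  unfold kappa; split <;> omega

lemma two_le_kappa {l : List Bool} (hl : l ≠ []) : 2 ≤ kappa l := by
  unfold kappa; rw [if_neg hl]; omega

lemma kappa_map_not (l : List Bool) : kappa (l.map (fun b => !b)) = kappa l := by
  induction l with
  | nil => rfl
  | cons x l ih =>
    cases l with
    | nil => rfl
    | cons y l => cases x <;> cases y <;> simpa using ih

lemma kappa_concat_append_cons (a : List Bool) (x y : Bool) (b : List Bool) :
    kappa (a ++ [x] ++ y :: b) + 2 =
      kappa (a ++ [x]) + kappa (y :: b) + if x = y then 0 else 1 := by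
  induction a with
  | nil => simp only [List.nil_append, List.cons_append, kappa_cons_cons, kappa_singleton]; omega
  | cons z a ih =>
    cases a with
    | nil =>
      simp only [List.nil_append, List.cons_append, kappa_cons_cons, kappa_singleton] at ih ⊢
      split <;> omega
    | cons w a => simp only [List.cons_append, kappa_cons_cons] at ih ⊢; omega

lemma subword_concat (v : List Bool) (a : Bool) (T : Finset ℕ) :
    subword (v ++ [a]) T = subword v T ++ if v.length + 1 ∈ T then [a] else [] := by
  simp only [subword, List.zipIdx_append, zero_add, List.zipIdx_cons, List.zipIdx_nil,
    List.map_append, List.map_cons, Prod.swap_prod_mk, List.map_nil, List.filter_append,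
    List.append_cancel_left_eq]
  split <;> simp [*]

lemma subword_insert_of_length_lt (v : List Bool) (T : Finset ℕ) {k : ℕ} (hk : v.length < k) :
    subword v (insert k T) = subword v T := by
  unfold subword
  congr 1
  refine List.filter_congr fun p hp => ?_
  obtain ⟨q, hq, rfl⟩ := List.mem_map.1 hp
  have hne : q.2 + 1 ≠ k := by have := (List.mem_zipIdx hq).2.1; omega
  simp [hne]

lemma sum_powerset_Icc_subword {M : Type*} [AddCommMonoid M] (F : List Bool → ℕ → M)
    (v : List Bool) :
    ∑ T ∈ (Finset.Icc 1 v.length).powerset, F (subword v T) T.card =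
      (v.sublists.map fun s => F s s.length).sum := by
  induction v using List.reverseRecOn generalizing F with
  | nil => simp [subword]
  | append_singleton v a ih =>
    have hnot : ∀ T ∈ (Finset.Icc 1 v.length).powerset, v.length + 1 ∉ T := fun T hT h => by
      have := Finset.mem_Icc.1 (Finset.mem_powerset.1 hT h); omega
    rw [List.length_append, List.length_singleton,
      ← Finset.insert_Icc_right_eq_Icc_add_one (by omega), Finset.sum_powerset_insert (by simp),
      List.sublists_concat, List.map_append, List.sum_append, List.map_map, ← ih]
    simp only [Function.comp_def, List.length_append, List.length_singleton]
    rw [← ih fun s k => F (s ++ [a]) (k + 1)]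
    congr 1 <;> refine Finset.sum_congr rfl fun T hT => ?_
    · simp [subword_concat, hnot T hT]
    · simp [subword_concat, subword_insert_of_length_lt, Finset.card_insert_of_notMem (hnot T hT)]

noncomputable def summand (s : List Bool) : ℤ[X] :=
  (X + 1) ^ kappa s * X ^ (s.length + 1 - kappa s)

noncomputable def reducedSummand (s : List Bool) : ℤ[X] :=
  (X + 1) ^ (kappa s - 1) * X ^ (s.length + 1 - kappa s)

noncomputable def edgeSign : Option Bool → ℤ[X]
  | none => 0
  | some true => 1
  | some false => -1

lemma fPoly_eq_sum_sublists (v : List Bool) : fPoly v = 1 + (v.sublists.map summand).sum :=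
  congrArg (1 + ·)
    (sum_powerset_Icc_subword (fun s k => (X + 1) ^ kappa s * X ^ (k + 1 - kappa s)) v)

lemma summand_eq_X_add_one_mul (s : List Bool) : summand s = (X + 1) * reducedSummand s := by
  rw [summand, reducedSummand, ← mul_assoc, ← pow_succ', Nat.sub_add_cancel (one_le_kappa s)]

lemma reducedSummand_of_kappa_eq {s : List Bool} {j r : ℕ} (hk : kappa s = j + 1)
    (hl : s.length = j + r) : reducedSummand s = (X + 1) ^ j * X ^ r := by
  rw [reducedSummand, hk, hl]
  congr 2; omega

@[simp] lemma reducedSummand_nil : reducedSummand [] = 1 := by simp [reducedSummand]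

@[simp] lemma reducedSummand_singleton (x : Bool) : reducedSummand [x] = X + 1 := by
  simp [reducedSummand]

lemma reducedSummand_map_not (s : List Bool) :
    reducedSummand (s.map fun b => !b) = reducedSummand s := by
  simp [reducedSummand, kappa_map_not]

lemma monic_X_add_one : (X + 1 : ℤ[X]).Monic := by simpa using monic_X_add_C (1 : ℤ)

lemma reducedSummand_monic (s : List Bool) : (reducedSummand s).Monic :=
  (monic_X_add_one.pow _).mul (monic_X_pow _)

lemma natDegree_reducedSummand (s : List Bool) : (reducedSummand s).natDegree = s.length := by
  have h := kappa_le_length_add_one s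
  have h1 := one_le_kappa s
  rw [reducedSummand, (monic_X_add_one.pow _).natDegree_mul (monic_X_pow _), natDegree_pow,
    natDegree_X_pow, show (X + 1 : ℤ[X]).natDegree = 1 by compute_degree!]
  omega

lemma coeff_reducedSummand_nonneg (s : List Bool) (i : ℕ) : 0 ≤ (reducedSummand s).coeff i := by
  rw [reducedSummand, coeff_mul_X_pow']
  split
  · rw [coeff_X_add_one_pow]; positivity
  · rfl

lemma exists_kappa_eq_of_ne_nil {s : List Bool} (hs : s ≠ []) :
    ∃ j r, kappa s = j + 2 ∧ s.length = j + 1 + r := by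
  have h := kappa_le_length_add_one s
  have h2 := two_le_kappa hs
  exact ⟨kappa s - 2, s.length + 1 - kappa s, by omega, by omega⟩

lemma X_add_one_mul_reducedSummand_concat_append_cons (a : List Bool) (x y : Bool)
    (b : List Bool) :
    (X + 1) * reducedSummand (a ++ [x] ++ y :: b) =
      (if x = y then X else X + 1) * (reducedSummand (a ++ [x]) * reducedSummand (y :: b)) := by
  obtain ⟨i, r, hi, hr⟩ := exists_kappa_eq_of_ne_nil (List.concat_ne_nil x a)
  obtain ⟨i', r', hi', hr'⟩ := exists_kappa_eq_of_ne_nil (List.cons_ne_nil y b)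
  have hk := kappa_concat_append_cons a x y b
  have hl : (a ++ [x] ++ y :: b).length = (a ++ [x]).length + (y :: b).length :=
    List.length_append
  rw [reducedSummand_of_kappa_eq hi hr, reducedSummand_of_kappa_eq hi' hr']
  split_ifs at hk ⊢
  · rw [reducedSummand_of_kappa_eq (j := i + i' + 1) (r := r + r' + 1) (by omega) (by omega)]
    ring
  · rw [reducedSummand_of_kappa_eq (j := i + i' + 2) (r := r + r') (by omega) (by omega)]
    ring

lemma reducedSummand_concat_concat (a : List Bool) (x y : Bool) :
    reducedSummand (a ++ [x, y]) = (if x = y then X else X + 1) * reducedSummand (a ++ [x]) := by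
  refine mul_left_cancel₀ (X_add_C_ne_zero (1 : ℤ)) ?_
  simpa [mul_comm, mul_left_comm] using X_add_one_mul_reducedSummand_concat_append_cons a x y []

lemma reducedSummand_cons_cons (x y : Bool) (b : List Bool) :
    reducedSummand (x :: y :: b) = (if x = y then X else X + 1) * reducedSummand (y :: b) := by
  refine mul_left_cancel₀ (X_add_C_ne_zero (1 : ℤ)) ?_
  simpa [mul_comm, mul_left_comm] using X_add_one_mul_reducedSummand_concat_append_cons [] x y b

lemma summand_append_sub_summand_append_map_not (a b : List Bool) :
    summand (a ++ b) - summand (a ++ b.map fun x => !x) =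
      -(edgeSign a.getLast? * edgeSign b.head?) * (reducedSummand a * reducedSummand b) := by
  rcases List.eq_nil_or_concat a with rfl | ⟨a, x, rfl⟩
  · simp [summand, kappa_map_not, edgeSign]
  rcases b with _ | ⟨y, b⟩
  · simp [edgeSign]
  have hb := reducedSummand_map_not (y :: b)
  simp only [List.map_cons] at hb ⊢
  simp only [List.concat_eq_append, summand_eq_X_add_one_mul,
    X_add_one_mul_reducedSummand_concat_append_cons, hb, List.getLast?_concat, List.head?_cons]
  cases x <;> cases y <;> simp [edgeSign] <;> ring

lemma fPoly_append_eq (p q : List Bool) :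
    fPoly (p ++ q) = fPoly (p ++ q.map fun x => !x) +
      (p.sublists.map fun a => edgeSign a.getLast? * reducedSummand a).sum *
        (q.sublists.map fun b => -edgeSign b.head? * reducedSummand b).sum := by
  have hpt : ∀ a b, summand (a ++ b) = summand (a ++ b.map fun x => !x) +
      edgeSign a.getLast? * reducedSummand a * (-edgeSign b.head? * reducedSummand b) := by
    intro a b
    linear_combination summand_append_sub_summand_append_map_not a b
  simp only [fPoly_eq_sum_sublists, List.sum_map_sublists_append, List.sublists_map, List.map_map,
    Function.comp_def]
  rw [← List.sum_map_mul_left]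
  simp only [← List.sum_map_mul_right]
  rw [add_assoc, ← List.sum_map_add]
  congr 2
  refine List.map_congr_left fun b _ => ?_
  rw [← List.sum_map_add]
  exact congrArg List.sum (List.map_congr_left fun a _ => hpt a b)

lemma sum_sublists_concat_true (p : List Bool) :
    ((p ++ [true]).sublists.map fun a => edgeSign a.getLast? * reducedSummand a).sum =
      (p.sublists.map fun a =>
        reducedSummand a * X + if a.getLast? ≠ some false then reducedSummand a else 0).sum := by
  rw [List.sublists_concat, List.map_append, List.sum_append, List.map_map, ← List.sum_map_add]
  congr 1
  refine List.map_congr_left fun a _ => ?_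
  rcases List.eq_nil_or_concat a with rfl | ⟨a, x, rfl⟩
  · simp [edgeSign]
  cases x <;> simp [edgeSign, reducedSummand_concat_concat] <;> ring

lemma sum_sublists_cons_false (q : List Bool) :
    ((false :: q).sublists.map fun b => -edgeSign b.head? * reducedSummand b).sum =
      (q.sublists.map fun b =>
        reducedSummand b * X + if b.head? ≠ some true then reducedSummand b else 0).sum := by
  rw [List.sum_map_sublists_cons]
  congr 1
  refine List.map_congr_left fun b _ => ?_
  rcases b with _ | ⟨y, b⟩
  · simp [edgeSign]
  cases y <;> simp [edgeSign, reducedSummand_cons_cons] <;> ring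

lemma posCoeffsUpTo_sum_sublists (p : List Bool) (c : List Bool → Prop) [DecidablePred c]
    (hc : c []) :
    PosCoeffsUpTo
      (p.sublists.map fun s => reducedSummand s * X + if c s then reducedSummand s else 0).sum
      (p.length + 1) := by
  set g := fun s => reducedSummand s * X + if c s then reducedSummand s else 0
  have hcoeff_zero : ∀ s, (g s).coeff 0 = if c s then (reducedSummand s).coeff 0 else 0 := by
    intro s; simp only [g]; split_ifs <;> simp
  have hcoeff_succ : ∀ s i, (g s).coeff (i + 1) =
      (reducedSummand s).coeff i + if c s then (reducedSummand s).coeff (i + 1) else 0 := by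
    intro s i; simp only [g]; split_ifs <;> simp [coeff_mul_X]
  have hnonneg : ∀ s i, 0 ≤ (g s).coeff i := by
    rintro s (_ | i)
    · rw [hcoeff_zero]; split_ifs <;> simp [coeff_reducedSummand_nonneg]
    · rw [hcoeff_succ]; split_ifs <;> simp [coeff_reducedSummand_nonneg, add_nonneg]
  have hsum : ∀ i,
      ((p.sublists.map g).sum).coeff i = (p.sublists.map fun s => (g s).coeff i).sum := by
    intro i; simp [coeff_list_sum, List.map_map, Function.comp_def]
  refine ⟨natDegree_le_iff_coeff_eq_zero.2 fun N hN => ?_, fun i hi => ?_⟩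
  · rw [hsum]
    refine List.sum_eq_zero fun x hx => ?_
    obtain ⟨s, hs, rfl⟩ := List.mem_map.1 hx
    have hlen := (List.mem_sublists.1 hs).length_le
    obtain ⟨i, rfl⟩ : ∃ i, N = i + 1 := ⟨N - 1, by omega⟩
    rw [hcoeff_succ, coeff_eq_zero_of_natDegree_lt, coeff_eq_zero_of_natDegree_lt] <;>
      simp [natDegree_reducedSummand] <;> omega
  · -- the prefix of length `i - 1` contributes its (monic) leading coefficient to degree `i`
    obtain ⟨s, hs, hpos⟩ : ∃ s ∈ p.sublists, 0 < (g s).coeff i := by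
      rcases i with _ | i
      · exact ⟨[], List.mem_sublists.2 (List.nil_sublist p), by simp [hcoeff_zero, hc]⟩
      · refine ⟨p.take i, List.mem_sublists.2 (List.take_sublist i p), ?_⟩
        have hlead := (reducedSummand_monic (p.take i)).coeff_natDegree
        rw [natDegree_reducedSummand, List.length_take, min_eq_left (by omega)] at hlead
        rw [hcoeff_succ, hlead]
        split_ifs <;> linarith [coeff_reducedSummand_nonneg (p.take i) (i + 1)]
    rw [hsum]
    exact hpos.trans_le (List.single_le_sum (by simp [hnonneg]) _ (List.mem_map_of_mem hs))

end DescentPolytope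

/-- for `|u| + |v| = n - 3`, the difference
`F(u·y·x·v) - F(u·y·y·v̄)` has degree `n-1` and strictly positive coefficients in
degrees `0,…,n-1` (here `x = false`, `y = true`). -/
theorem stmt9 (n : ℕ) (u v : List Bool) (h : u.length + v.length + 3 = n) :
    (fPoly (u ++ [true, false] ++ v) -
        fPoly (u ++ [true, true] ++ v.map (fun b => !b))).natDegree = n - 1 ∧
    ∀ i ≤ n - 1,
      0 < (fPoly (u ++ [true, false] ++ v) -
            fPoly (u ++ [true, true] ++ v.map (fun b => !b))).coeff i := by
  have hyx : u ++ [true, false] ++ v = (u ++ [true]) ++ false :: v := by simp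
  have hyy : u ++ [true, true] ++ v.map (fun b => !b) =
      (u ++ [true]) ++ (false :: v).map (fun b => !b) := by simp
  have hu := DescentPolytope.posCoeffsUpTo_sum_sublists u (fun a => a.getLast? ≠ some false)
    (by simp)
  have hv := DescentPolytope.posCoeffsUpTo_sum_sublists v (fun b => b.head? ≠ some true) (by simp)
  have hpos := hu.mul hv
  rw [hyx, hyy, DescentPolytope.fPoly_append_eq, add_sub_cancel_left,
    DescentPolytope.sum_sublists_concat_true, DescentPolytope.sum_sublists_cons_false,
    show n - 1 = u.length + 1 + (v.length + 1) by omega]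
  exact ⟨hpos.natDegree_eq, hpos.2⟩
end

section
/- Let α_n be 1 plus the number of subsets T ⊆ {1,...,n-1} such that the subword of the alternating word z_{n-1} = xyxy... (length n-1) at positions T is alternating. Then α_n equals the Fibonacci number F_{n+2} (with F_1 = F_2 = 1). Equivalently, the number of vertices of the descent polytope DP_{z_{n-1}} is F_{n+2}. -/
/-- The alternating word of length `m` starting with `x` (where `x = false`, `y = true`). -/
def zWord (m : ℕ) : List Bool := (List.range m).map (fun i => decide (i % 2 = 1))

/-!
Let `a(w)` be the number of alternating subwords of a word `w` and `e_c(w)` the number of those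
that stay alternating when the letter `c` is appended. Splitting on whether the last position of
`w b` is used gives `a(w b) = a(w) + e_b(w)` and `e_{!b}(w b) = a(w) + 1`, the `+ 1` coming from
the empty subword, which can be followed by either letter. Since the last letter of `z_m`
alternates, `a(z_{m+1}) = a(z_m) + a(z_{m-1}) + 1`, so `a(z_m) + 1` is a Fibonacci number.
-/

open Finset List

section Alternating

variable {s : List Bool} {b c : Bool}

theorem isChain_ne_append_singleton_iff :
    (s ++ [b]).IsChain (· ≠ ·) ↔ s.IsChain (· ≠ ·) ∧ ∀ x ∈ s.getLast?, x ≠ b := by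
  simp [isChain_append]

theorem isChain_ne_append_singleton_or_not :
    (s ++ [b]).IsChain (· ≠ ·) ∨ (s ++ [!b]).IsChain (· ≠ ·) ↔ s.IsChain (· ≠ ·) := by
  simp only [isChain_ne_append_singleton_iff]
  rcases s.getLast? with _ | x <;> [simp; (cases x <;> cases b <;> simp)]

theorem isChain_ne_append_singleton_and_not :
    (s ++ [b]).IsChain (· ≠ ·) ∧ (s ++ [!b]).IsChain (· ≠ ·) ↔ s = [] := by
  simp only [isChain_ne_append_singleton_iff]
  rcases h : s.getLast? with _ | x
  · simp [getLast?_eq_none_iff.mp h]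
  · have : s ≠ [] := by simp [← getLast?_eq_none_iff, h]
    cases x <;> cases b <;> simp [this]

theorem isChain_ne_append_pair_iff (hbc : b ≠ c) :
    (s ++ [b] ++ [c]).IsChain (· ≠ ·) ↔ (s ++ [b]).IsChain (· ≠ ·) := by
  simp [hbc]

end Alternating

section Subword

theorem subword_append_singleton (w : List Bool) (b : Bool) (T : Finset ℕ) :
    subword (w ++ [b]) T = subword w T ++ if w.length + 1 ∈ T then [b] else [] := by
  by_cases h : w.length + 1 ∈ T <;> simp [subword, zipIdx_append, h]

theorem subword_insert_of_length_lt (w : List Bool) (T : Finset ℕ) {k : ℕ} (hk : w.length < k) :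
    subword w (insert k T) = subword w T := by
  unfold subword
  congr 1
  refine filter_congr fun p hp => ?_
  obtain ⟨⟨a, i⟩, hai, rfl⟩ := List.mem_map.1 hp
  have := (List.mem_zipIdx hai).2.1
  simp only [Prod.swap_prod_mk, mem_insert, decide_eq_decide, or_iff_right_iff_imp]
  omega

def subwordCount (w : List Bool) (P : List Bool → Prop) [DecidablePred P] : ℕ :=
  #{T ∈ (Icc 1 w.length).powerset | P (subword w T)}

variable (w : List Bool) {P Q : List Bool → Prop} [DecidablePred P] [DecidablePred Q]

theorem subwordCount_congr (h : ∀ s, P s ↔ Q s) : subwordCount w P = subwordCount w Q := by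
  unfold subwordCount
  rw [filter_congr fun T _ => h (subword w T)]

theorem subwordCount_add_subwordCount :
    subwordCount w P + subwordCount w Q =
      subwordCount w (fun s => P s ∨ Q s) + subwordCount w (fun s => P s ∧ Q s) := by
  rw [subwordCount, subwordCount, subwordCount, subwordCount, filter_or, filter_and,
    card_union_add_card_inter]

theorem subwordCount_nil : subwordCount [] P = if P [] then 1 else 0 := by
  split_ifs <;> simp [subwordCount, subword, *]

theorem subwordCount_append_singleton (b : Bool) :
    subwordCount (w ++ [b]) P = subwordCount w P + subwordCount w (fun s => P (s ++ [b])) := by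
  have hm : w.length + 1 ∉ Icc 1 w.length := by simp
  simp only [subwordCount, card_filter, length_append, length_singleton,
    ← insert_Icc_right_eq_Icc_add_one (Nat.le_add_left 1 w.length), sum_powerset_insert hm]
  congr 1 <;> refine sum_congr rfl fun T hT => ?_
  · rw [subword_append_singleton, if_neg fun h => hm (mem_powerset.1 hT h), append_nil]
  · rw [subword_append_singleton, if_pos (mem_insert_self _ _),
      subword_insert_of_length_lt _ _ (Nat.lt_add_one _)]

theorem subwordCount_eq_nil : subwordCount w (· = []) = 1 := by
  induction w using List.reverseRecOn with
  | nil => simp [subwordCount_nil]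
  | append_singleton w b ih =>
    rw [subwordCount_append_singleton, ih]
    simp [subwordCount]

end Subword

section AlternatingSubwords

variable (w : List Bool) (b : Bool)

/-- Every alternating subword of `w` stays alternating when followed by exactly one of `b`, `!b`,
except the empty subword, which can be followed by both. -/
theorem subwordCount_append_singleton_isChain_append_not :
    subwordCount (w ++ [b]) (fun s => (s ++ [!b]).IsChain (· ≠ ·)) =
      subwordCount w (IsChain (· ≠ ·)) + 1 := by
  rw [subwordCount_append_singleton,
    subwordCount_congr w (Q := fun s => (s ++ [b]).IsChain (· ≠ ·))
      fun s => isChain_ne_append_pair_iff (by cases b <;> decide),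
    add_comm, subwordCount_add_subwordCount,
    subwordCount_congr w fun s => isChain_ne_append_singleton_or_not,
    subwordCount_congr w fun s => isChain_ne_append_singleton_and_not, subwordCount_eq_nil]

end AlternatingSubwords

theorem zWord_succ (m : ℕ) : zWord (m + 1) = zWord m ++ [decide (m % 2 = 1)] := by
  simp [zWord, range_succ]

theorem length_zWord (m : ℕ) : (zWord m).length = m := by
  simp [zWord]

theorem subwordCount_zWord_isChain (m : ℕ) :
    subwordCount (zWord m) (IsChain (· ≠ ·)) + 1 = Nat.fib (m + 3) ∧
      subwordCount (zWord m) (fun s => (s ++ [decide (m % 2 = 1)]).IsChain (· ≠ ·)) =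
        Nat.fib (m + 2) := by
  induction m with
  | zero => simp [zWord, subwordCount_nil, Nat.fib_add_two]
  | succ m ih =>
    have hlast : decide ((m + 1) % 2 = 1) = !decide (m % 2 = 1) := by
      rcases Nat.mod_two_eq_zero_or_one m with h | h <;> simp [Nat.succ_mod_two_eq_one_iff, h]
    rw [zWord_succ, subwordCount_append_singleton, hlast,
      subwordCount_append_singleton_isChain_append_not]
    have hfib : Nat.fib (m + 1 + 3) = Nat.fib (m + 2) + Nat.fib (m + 3) := Nat.fib_add_two
    exact ⟨by omega, ih.1⟩

/-- one plus the number of alternating subwords of `z_{n-1}` is the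
Fibonacci number `F_{n+2}`. -/
theorem stmt13 (n : ℕ) (hn : 1 ≤ n) :
    1 + ((Finset.Icc 1 (n - 1)).powerset.filter
          (fun T => List.IsChain (· ≠ ·) (subword (zWord (n - 1)) T))).card =
      Nat.fib (n + 2) := by
  obtain ⟨m, rfl⟩ := Nat.exists_eq_add_of_le' hn
  have h := (subwordCount_zWord_isChain m).1
  rw [subwordCount, length_zWord] at h
  simpa [add_comm] using h
end
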